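/- (Three-term identity) Let τ ∈ ℍ and let w, x, y, z be complex numbers. Set w' = (w+x+y+z)/2, x' = (w+x−y−z)/2, y' = (w−x+y−z)/2, z' = (w−x−y+z)/2, and w'' = (w+x+y−z)/2, x'' = (w+x−y+z)/2, y'' = (w−x+y+z)/2, z'' = (w−x−y−z)/2. Then ϑ₁(w)ϑ₁(x)ϑ₁(y)ϑ₁(z) + ϑ₀(w')ϑ₀(x')ϑ₀(y')ϑ₀(z') − ϑ₀(w'')ϑ₀(x'')ϑ₀(y'')ϑ₀(z'') = 0. -/

import Mathlib

open scoped UpperHalfPlane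

/-- `e(x) = exp(2πix)`. -/
noncomputable def e (x : ℂ) : ℂ := Complex.exp (2 * Real.pi * Complex.I * x)

/-- The theta function with characteristic `(p, q)`:
`θ_{(p,q)}(z,τ) = ∑_{n ∈ ℤ} e((1/2)(n+p)²τ + (n+p)(z+q))`. -/
noncomputable def jtheta (p q : ℝ) (z τ : ℂ) : ℂ :=
  ∑' n : ℤ, e ((1 / 2 : ℂ) * ((n : ℂ) + p) ^ 2 * τ + ((n : ℂ) + p) * (z + q))

/-- Jacobi's basic theta function `ϑ₀(z) = θ_{(0,1/2)}(z,τ)`. -/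
noncomputable def jTheta0 (z τ : ℂ) : ℂ := jtheta 0 (1 / 2) z τ

/-- Jacobi's basic theta function `ϑ₁(z) = θ_{(1/2,1/2)}(z,τ)`. -/
noncomputable def jTheta1 (z τ : ℂ) : ℂ := jtheta (1 / 2) (1 / 2) z τ

/-- Jacobi's basic theta function `ϑ₂(z) = θ_{(1/2,0)}(z,τ)`. -/
noncomputable def jTheta2 (z τ : ℂ) : ℂ := jtheta (1 / 2) 0 z τ

/-- Jacobi's basic theta function `ϑ₃(z) = θ_{(0,0)}(z,τ)`. -/
noncomputable def jTheta3 (z τ : ℂ) : ℂ := jtheta 0 0 z τ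

/-!
Each product of four theta series is a theta series over `ℤ⁴`. For the `ϑ₀`-products, the
orthogonal matrix `½ (±1)` relating `(w, x, y, z)` to the half sums moves the summation index `n`
to a point of `ℤ⁴` when the coordinate sum of `n` is even, and of `(ℤ + ½)⁴` (the index set of the
`ϑ₁`-product) when it is odd. Splitting every sum over `ℤ⁴` by this parity, unimodular changes of
variables show: the even parts `E` of the two `ϑ₀`-products agree, and writing `E₁ + O₁` for the
split `ϑ₁`-product, the odd parts of the `ϑ₀`-products are `-E₁` and `O₁`. Hence
`(E₁ + O₁) + (E - E₁) - (E + O₁) = 0`. Replacing `z` by `-z` turns the first `ϑ₀`-product into the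
second.
-/

open Complex

lemma e_add (a b : ℂ) : e (a + b) = e a * e b := by
  rw [e, e, e, ← exp_add, mul_add]

lemma e_intCast (k : ℤ) : e k = 1 := by
  rw [e, mul_comm, exp_int_mul_two_pi_mul_I]

lemma e_one_half : e (1 / 2) = -1 := by
  rw [e, show 2 * (Real.pi : ℂ) * I * (1 / 2) = Real.pi * I by ring, exp_pi_mul_I]

lemma e_add_intCast (a : ℂ) (k : ℤ) : e (a + k) = e a := by
  rw [e_add, e_intCast, mul_one]

lemma e_add_intCast_add_one_half (a : ℂ) (k : ℤ) : e (a + k + 1 / 2) = -e a := by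
  rw [e_add, e_add_intCast, e_one_half, mul_neg_one]

section FourfoldProduct

variable {R ι : Type*} [NormedRing R] [CompleteSpace R] {f₁ f₂ f₃ f₄ : ι → R}

lemma summable_mul_mul_mul_of_summable_norm (h₁ : Summable (‖f₁ ·‖)) (h₂ : Summable (‖f₂ ·‖))
    (h₃ : Summable (‖f₃ ·‖)) (h₄ : Summable (‖f₄ ·‖)) :
    Summable fun n : ι × ι × ι × ι => f₁ n.1 * (f₂ n.2.1 * (f₃ n.2.2.1 * f₄ n.2.2.2)) :=
  (summable_mul_of_summable_norm h₁ (h₂.mul_norm (h₃.mul_norm h₄)) :)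

lemma tsum_mul_tsum_mul_tsum_mul_tsum_of_summable_norm (h₁ : Summable (‖f₁ ·‖))
    (h₂ : Summable (‖f₂ ·‖)) (h₃ : Summable (‖f₃ ·‖)) (h₄ : Summable (‖f₄ ·‖)) :
    (∑' i, f₁ i) * (∑' i, f₂ i) * (∑' i, f₃ i) * (∑' i, f₄ i)
      = ∑' n : ι × ι × ι × ι, f₁ n.1 * (f₂ n.2.1 * (f₃ n.2.2.1 * f₄ n.2.2.2)) := by
  rw [mul_assoc, mul_assoc, tsum_mul_tsum_of_summable_norm h₃ h₄]
  rw [tsum_mul_tsum_of_summable_norm h₂ (h₃.mul_norm h₄)]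
  rw [tsum_mul_tsum_of_summable_norm h₁ (h₂.mul_norm (h₃.mul_norm h₄))]

end FourfoldProduct

def coordSum (n : ℤ × ℤ × ℤ × ℤ) : ℤ := n.1 + n.2.1 + n.2.2.1 + n.2.2.2

def evenParam (k : ℤ × ℤ × ℤ × ℤ) : ℤ × ℤ × ℤ × ℤ :=
  (k.1, k.2.1, k.2.2.1, 2 * k.2.2.2 - k.1 - k.2.1 - k.2.2.1)

def oddParam (k : ℤ × ℤ × ℤ × ℤ) : ℤ × ℤ × ℤ × ℤ :=
  (k.1, k.2.1, k.2.2.1, 2 * k.2.2.2 + 1 - k.1 - k.2.1 - k.2.2.1)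

def evenParamEquiv : ℤ × ℤ × ℤ × ℤ ≃ {n : ℤ × ℤ × ℤ × ℤ | Even (coordSum n)} where
  toFun k := ⟨evenParam k, k.2.2.2, by simp only [coordSum, evenParam]; ring⟩
  invFun n := (n.1.1, n.1.2.1, n.1.2.2.1, coordSum n.1 / 2)
  left_inv := by
    rintro ⟨a, b, c, d⟩
    simp only [coordSum, evenParam, Prod.mk.injEq, true_and]
    omega
  right_inv := by
    rintro ⟨⟨a, b, c, d⟩, m, hm⟩
    simp only [coordSum] at hm
    ext <;> simp only [coordSum, evenParam]; omega

def oddParamEquiv : ℤ × ℤ × ℤ × ℤ ≃ ↥{n : ℤ × ℤ × ℤ × ℤ | Even (coordSum n)}ᶜ where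
  toFun k := ⟨oddParam k, by
    simp only [coordSum, oddParam, Set.mem_compl_iff, Set.mem_ofPred_eq, Int.not_even_iff_odd]
    exact ⟨k.2.2.2, by ring⟩⟩
  invFun n := (n.1.1, n.1.2.1, n.1.2.2.1, coordSum n.1 / 2)
  left_inv := by
    rintro ⟨a, b, c, d⟩
    simp only [coordSum, oddParam, Prod.mk.injEq, true_and]
    omega
  right_inv := by
    rintro ⟨⟨a, b, c, d⟩, hn⟩
    obtain ⟨m, hm⟩ := Int.not_even_iff_odd.mp hn
    simp only [coordSum] at hm
    ext <;> simp only [coordSum, oddParam]; omega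

lemma tsum_eq_tsum_evenParam_add_tsum_oddParam {E : Type*} [NormedAddCommGroup E]
    [CompleteSpace E] {F : ℤ × ℤ × ℤ × ℤ → E} (hF : Summable F) :
    ∑' n, F n = ∑' k, F (evenParam k) + ∑' k, F (oddParam k) := by
  rw [← hF.tsum_subtype_add_tsum_subtype_compl {n | Even (coordSum n)}]
  exact congr_arg₂ (· + ·) (evenParamEquiv.tsum_eq (F ·)).symm (oddParamEquiv.tsum_eq (F ·)).symm

section ThetaProducts

noncomputable def thetaTerm (p q : ℝ) (z τ : ℂ) (n : ℤ) : ℂ :=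
  e ((1 / 2 : ℂ) * ((n : ℂ) + p) ^ 2 * τ + ((n : ℂ) + p) * (z + q))

lemma summable_norm_thetaTerm (p q : ℝ) (z : ℂ) {τ : ℂ} (hτ : 0 < τ.im) :
    Summable (‖thetaTerm p q z τ ·‖) := by
  have hθ : Summable (jacobiTheta₂_term · (p * τ + z + q) τ) :=
    (summable_jacobiTheta₂_term_iff _ τ).mpr hτ
  refine (hθ.mul_left (e ((1 / 2 : ℂ) * p ^ 2 * τ + p * (z + q)))).norm.congr fun n => ?_
  rw [thetaTerm, e, e, jacobiTheta₂_term, ← exp_add]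
  ring_nf

noncomputable def thetaQuadTerm (p q : ℝ) (τ z₁ z₂ z₃ z₄ : ℂ) (n : ℤ × ℤ × ℤ × ℤ) : ℂ :=
  thetaTerm p q z₁ τ n.1 *
    (thetaTerm p q z₂ τ n.2.1 * (thetaTerm p q z₃ τ n.2.2.1 * thetaTerm p q z₄ τ n.2.2.2))

variable (p q : ℝ) (z₁ z₂ z₃ z₄ : ℂ) {τ : ℂ}

lemma summable_thetaQuadTerm (hτ : 0 < τ.im) : Summable (thetaQuadTerm p q τ z₁ z₂ z₃ z₄) :=
  summable_mul_mul_mul_of_summable_norm (summable_norm_thetaTerm p q z₁ hτ)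
    (summable_norm_thetaTerm p q z₂ hτ) (summable_norm_thetaTerm p q z₃ hτ)
    (summable_norm_thetaTerm p q z₄ hτ)

lemma jtheta_mul_jtheta_mul_jtheta_mul_jtheta_eq_tsum (hτ : 0 < τ.im) :
    jtheta p q z₁ τ * jtheta p q z₂ τ * jtheta p q z₃ τ * jtheta p q z₄ τ
      = ∑' n, thetaQuadTerm p q τ z₁ z₂ z₃ z₄ n :=
  tsum_mul_tsum_mul_tsum_mul_tsum_of_summable_norm (summable_norm_thetaTerm p q z₁ hτ)
    (summable_norm_thetaTerm p q z₂ hτ) (summable_norm_thetaTerm p q z₃ hτ)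
    (summable_norm_thetaTerm p q z₄ hτ)

end ThetaProducts

section HalfSums

noncomputable def halfSumTerm (τ w x y z : ℂ) : ℤ × ℤ × ℤ × ℤ → ℂ :=
  thetaQuadTerm 0 (1 / 2) τ ((w + x + y + z) / 2) ((w + x - y - z) / 2) ((w - x + y - z) / 2)
    ((w - x - y + z) / 2)

lemma jTheta0_halfSums_prod_eq_tsum {τ : ℂ} (hτ : 0 < τ.im) (w x y z : ℂ) :
    jTheta0 ((w + x + y + z) / 2) τ * jTheta0 ((w + x - y - z) / 2) τ
        * jTheta0 ((w - x + y - z) / 2) τ * jTheta0 ((w - x - y + z) / 2) τ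
      = ∑' n, halfSumTerm τ w x y z n :=
  jtheta_mul_jtheta_mul_jtheta_mul_jtheta_eq_tsum _ _ _ _ _ _ hτ

lemma summable_halfSumTerm {τ : ℂ} (hτ : 0 < τ.im) (w x y z : ℂ) :
    Summable (halfSumTerm τ w x y z) :=
  summable_thetaQuadTerm _ _ _ _ _ _ hτ

def shearEquiv : Equiv.Perm (ℤ × ℤ × ℤ × ℤ) :=
  Function.Involutive.toPerm
    (fun k => (k.1 - (k.2.2.2 - k.2.1 - k.2.2.1), k.2.1 + (k.2.2.2 - k.2.1 - k.2.2.1),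
      k.2.2.1 + (k.2.2.2 - k.2.1 - k.2.2.1), k.2.2.2))
    (fun _ => by ext <;> dsimp only <;> ring)

def oddToEvenEquiv : ℤ × ℤ × ℤ × ℤ ≃ ℤ × ℤ × ℤ × ℤ where
  toFun k := (k.2.2.2, k.1 + k.2.1 - k.2.2.2 - 1, k.1 + k.2.2.1 - k.2.2.2 - 1, k.1 - 1)
  invFun j := (j.2.2.2 + 1, j.1 + j.2.1 - j.2.2.2, j.1 + j.2.2.1 - j.2.2.2, j.1)
  left_inv _ := by ext <;> dsimp only <;> ring
  right_inv _ := by ext <;> dsimp only <;> ring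

def oddToOddEquiv : ℤ × ℤ × ℤ × ℤ ≃ ℤ × ℤ × ℤ × ℤ where
  toFun k := (k.2.2.2, k.1 + k.2.1 - k.2.2.2 - 1, k.1 + k.2.2.1 - k.2.2.2 - 1,
    k.1 + k.2.1 + k.2.2.1 - k.2.2.2 - 2)
  invFun j := (j.1 + j.2.1 + j.2.2.1 - j.2.2.2, j.2.2.2 - j.2.2.1 + 1, j.2.2.2 - j.2.1 + 1, j.1)
  left_inv _ := by ext <;> dsimp only <;> ring
  right_inv _ := by ext <;> dsimp only <;> ring

variable (τ w x y z : ℂ)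

lemma tsum_halfSumTerm_neg_evenParam :
    ∑' k, halfSumTerm τ w x y (-z) (evenParam k) = ∑' k, halfSumTerm τ w x y z (evenParam k) := by
  rw [← shearEquiv.tsum_eq]
  refine tsum_congr fun ⟨a, b, c, d⟩ => ?_
  simp only [shearEquiv, Function.Involutive.toPerm, Equiv.coe_fn_mk, halfSumTerm, thetaQuadTerm,
    thetaTerm, evenParam, ← e_add]
  congr 1
  push_cast
  ring

lemma tsum_halfSumTerm_oddParam :
    ∑' k, halfSumTerm τ w x y z (oddParam k)
      = -∑' k, thetaQuadTerm (1 / 2) (1 / 2) τ w x y z (evenParam k) := by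
  rw [← tsum_neg]
  conv_rhs => rw [← oddToEvenEquiv.tsum_eq]
  refine tsum_congr fun ⟨a, b, c, d⟩ => ?_
  simp only [oddToEvenEquiv, Equiv.coe_fn_mk, halfSumTerm, thetaQuadTerm, thetaTerm,
    evenParam, oddParam, ← e_add]
  convert e_add_intCast_add_one_half _ (d - a) using 2
  push_cast
  ring

lemma tsum_halfSumTerm_neg_oddParam :
    ∑' k, halfSumTerm τ w x y (-z) (oddParam k)
      = ∑' k, thetaQuadTerm (1 / 2) (1 / 2) τ w x y z (oddParam k) := by
  conv_rhs => rw [← oddToOddEquiv.tsum_eq]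
  refine tsum_congr fun ⟨a, b, c, d⟩ => ?_
  simp only [oddToOddEquiv, Equiv.coe_fn_mk, halfSumTerm, thetaQuadTerm, thetaTerm, oddParam,
    ← e_add]
  convert e_add_intCast _ (2 * d - a - b - c + 1) using 2
  push_cast
  ring

end HalfSums

/-- The three-term identity (Theorem 7.3). -/
theorem three_term_identity (τ : ℍ) (w x y z w' x' y' z' w'' x'' y'' z'' : ℂ)
    (hw' : w' = (w + x + y + z) / 2) (hx' : x' = (w + x - y - z) / 2)
    (hy' : y' = (w - x + y - z) / 2) (hz' : z' = (w - x - y + z) / 2)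
    (hw'' : w'' = (w + x + y - z) / 2) (hx'' : x'' = (w + x - y + z) / 2)
    (hy'' : y'' = (w - x + y + z) / 2) (hz'' : z'' = (w - x - y - z) / 2) :
    jTheta1 w τ * jTheta1 x τ * jTheta1 y τ * jTheta1 z τ
      + jTheta0 w' τ * jTheta0 x' τ * jTheta0 y' τ * jTheta0 z' τ
      - jTheta0 w'' τ * jTheta0 x'' τ * jTheta0 y'' τ * jTheta0 z'' τ = 0 := by
  subst hw' hx' hy' hz' hw'' hx'' hy'' hz''
  have hτ := τ.im_pos
  have hneg := jTheta0_halfSums_prod_eq_tsum hτ w x y (-z)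
  simp only [← sub_eq_add_neg, sub_neg_eq_add] at hneg
  rw [jTheta1, jTheta1, jTheta1, jTheta1,
    jtheta_mul_jtheta_mul_jtheta_mul_jtheta_eq_tsum _ _ _ _ _ _ hτ,
    jTheta0_halfSums_prod_eq_tsum hτ, hneg,
    tsum_eq_tsum_evenParam_add_tsum_oddParam (summable_thetaQuadTerm _ _ _ _ _ _ hτ),
    tsum_eq_tsum_evenParam_add_tsum_oddParam (summable_halfSumTerm hτ _ _ _ _),
    tsum_eq_tsum_evenParam_add_tsum_oddParam (summable_halfSumTerm hτ _ _ _ _),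
    tsum_halfSumTerm_neg_evenParam, tsum_halfSumTerm_oddParam, tsum_halfSumTerm_neg_oddParam]
  ring
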